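/- arXiv:2306.04902 — 2 statements merged into one kernel-verified Lean document; each statement's English description precedes it below -/
import Mathlib

section
/- Let $K \geq 1$, $x_1, \ldots, x_K \in [0,1]$, and set $S_k = \binom{K}{k}^{-1} \sum_{|J|=k} \prod_{j \in J} x_j$. Then $1 - \frac{1}{K}\sum_{j=1}^K x_j \leq \frac{1 - \prod_{j=1}^K x_j}{1 + \sum_{k=1}^{K-1} S_k}$. -/
/-!
Clearing the denominator and telescoping `∑_{k=1}^{K-1} (S_{k+1} - S_k) = S_K - S_1`, the
inequality becomes `∑_{k=1}^{K-1} S_{k+1} ≤ S_1 ∑_{k=1}^{K-1} S_k`, which holds termwise by the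
Newton-type inequality `S_{k+1} ≤ S_1 S_k`.

For the unnormalised elementary symmetric sums `e_k` this reads `K (k+1) e_{k+1} ≤ (K-k) e_1 e_k`.
Write `B_i = e_{k-1}(x without x_i)`. Then `∑ x_i B_i = k e_k` and
`e_1 e_k = (k+1) e_{k+1} + ∑ x_i² B_i`, so the inequality is Chebyshev's sum inequality for `x_i`
and `x_i B_i`. These are similarly ordered because
`x_i B_i - x_j B_j = (x_i - x_j) e_{k-1}(x without x_i, x_j)`.
-/

open Finset

/-- Normalized elementary symmetric mean `S_k` of `x_1, ..., x_K`. -/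
noncomputable def symMean (K : ℕ) (x : Fin K → ℝ) (k : ℕ) : ℝ :=
  ((K.choose k : ℝ))⁻¹ * ∑ J ∈ Finset.powersetCard k (Finset.univ : Finset (Fin K)),
    ∏ j ∈ J, x j

namespace Finset

variable {ι R : Type*}

def esymm [CommSemiring R] (s : Finset ι) (x : ι → R) (m : ℕ) : R :=
  ∑ t ∈ s.powersetCard m, ∏ i ∈ t, x i

section CommSemiring

variable [CommSemiring R] (s : Finset ι) (x : ι → R)

@[simp] lemma esymm_zero : s.esymm x 0 = 1 := by simp [esymm]

lemma esymm_one : s.esymm x 1 = ∑ i ∈ s, x i := by simp [esymm, powersetCard_one]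

variable [DecidableEq ι]

lemma powersetCard_erase (i : ι) (m : ℕ) :
    (s.erase i).powersetCard m = {t ∈ s.powersetCard m | i ∉ t} := by
  ext t
  simp [subset_erase, and_right_comm]

lemma mul_esymm_erase {s : Finset ι} {i : ι} (hi : i ∈ s) (m : ℕ) :
    x i * (s.erase i).esymm x m = ∑ t ∈ s.powersetCard (m + 1) with i ∈ t, ∏ j ∈ t, x j := by
  rw [esymm, mul_sum]
  refine sum_nbij' (insert i) (fun t => t.erase i) ?_ ?_ ?_ ?_ ?_ <;>
    simp only [mem_filter, mem_powersetCard, subset_erase]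
  · grind
  · grind
  · exact fun t ht => erase_insert ht.1.2
  · exact fun t ht => insert_erase ht.2
  · exact fun t ht => (prod_insert ht.1.2).symm

lemma esymm_succ_of_mem {s : Finset ι} {i : ι} (hi : i ∈ s) (m : ℕ) :
    s.esymm x (m + 1) = (s.erase i).esymm x (m + 1) + x i * (s.erase i).esymm x m := by
  rw [mul_esymm_erase x hi, esymm, esymm, powersetCard_erase]
  exact (sum_filter_not_add_sum_filter _ _ _).symm

lemma sum_mul_esymm_erase (m : ℕ) :
    ∑ i ∈ s, x i * (s.erase i).esymm x m = (m + 1) * s.esymm x (m + 1) := by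
  calc ∑ i ∈ s, x i * (s.erase i).esymm x m
      = ∑ i ∈ s, ∑ t ∈ s.powersetCard (m + 1) with i ∈ t, ∏ j ∈ t, x j :=
        sum_congr rfl fun i hi => mul_esymm_erase x hi m
    _ = ∑ t ∈ s.powersetCard (m + 1), ∑ _i ∈ t, ∏ j ∈ t, x j := by
        refine sum_comm' fun i t => ?_
        simp only [mem_filter, mem_powersetCard]
        grind
    _ = (m + 1) * s.esymm x (m + 1) := by
        rw [esymm, mul_sum]
        refine sum_congr rfl fun t ht => ?_
        rw [sum_const, (mem_powersetCard.1 ht).2, nsmul_eq_mul]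
        push_cast
        ring

lemma esymm_one_mul_esymm (m : ℕ) :
    s.esymm x 1 * s.esymm x (m + 1)
      = (m + 2) * s.esymm x (m + 2) + ∑ i ∈ s, x i ^ 2 * (s.erase i).esymm x m := by
  have h := sum_mul_esymm_erase s x (m + 1)
  push_cast at h
  rw [esymm_one, sum_mul, show (m : R) + 2 = m + 1 + 1 by ring, ← h, ← sum_add_distrib]
  refine sum_congr rfl fun i hi => ?_
  rw [esymm_succ_of_mem x hi]
  ring

end CommSemiring

lemma mul_esymm_erase_sub_mul_esymm_erase [CommRing R] [DecidableEq ι] (x : ι → R)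
    {s : Finset ι} {i j : ι} (hi : i ∈ s) (hj : j ∈ s) (hij : i ≠ j) (m : ℕ) :
    x i * (s.erase i).esymm x m - x j * (s.erase j).esymm x m
      = (x i - x j) * ((s.erase i).erase j).esymm x m := by
  cases m with
  | zero => simp only [esymm_zero]; ring
  | succ m =>
    rw [esymm_succ_of_mem x (mem_erase.2 ⟨hij.symm, hj⟩),
      esymm_succ_of_mem x (mem_erase.2 ⟨hij, hi⟩), erase_right_comm]
    ring

section Ordered

variable [CommRing R] [LinearOrder R] [IsStrictOrderedRing R] {s : Finset ι} {x : ι → R}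

lemma esymm_nonneg (hx : ∀ i ∈ s, 0 ≤ x i) (m : ℕ) : 0 ≤ s.esymm x m :=
  sum_nonneg fun _t ht => prod_nonneg fun j hj => hx j ((mem_powersetCard.1 ht).1 hj)

variable [DecidableEq ι]

lemma monovaryOn_mul_esymm_erase (hx : ∀ i ∈ s, 0 ≤ x i) (m : ℕ) :
    MonovaryOn (fun i => x i * (s.erase i).esymm x m) x s := by
  intro i hi j hj hlt
  have hij : i ≠ j := ne_of_apply_ne x hlt.ne
  have hC : 0 ≤ ((s.erase i).erase j).esymm x m :=
    esymm_nonneg (fun k hk => hx k (mem_of_mem_erase (mem_of_mem_erase hk))) m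
  rw [← sub_nonpos, mul_esymm_erase_sub_mul_esymm_erase x hi hj hij]
  exact mul_nonpos_of_nonpos_of_nonneg (sub_nonpos.2 hlt.le) hC

lemma card_mul_esymm_le (hx : ∀ i ∈ s, 0 ≤ x i) (m : ℕ) :
    (#s : R) * ((m + 2) * s.esymm x (m + 2))
      ≤ (#s - (m + 1)) * (s.esymm x 1 * s.esymm x (m + 1)) := by
  have cheb := (monovaryOn_mul_esymm_erase hx m).sum_mul_sum_le_card_mul_sum
  rw [sum_mul_esymm_erase, ← esymm_one] at cheb
  have hsq : ∑ i ∈ s, x i * (s.erase i).esymm x m * x i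
      = ∑ i ∈ s, x i ^ 2 * (s.erase i).esymm x m := sum_congr rfl fun _ _ => by ring
  linear_combination cheb + hsq * #s - #s * esymm_one_mul_esymm s x m

end Ordered

end Finset

section SymMean

variable {K : ℕ} (x : Fin K → ℝ)

lemma symMean_eq_esymm_div (k : ℕ) : symMean K x k = univ.esymm x k / K.choose k :=
  inv_mul_eq_div _ _

lemma symMean_nonneg (hx : ∀ j, 0 ≤ x j) (k : ℕ) : 0 ≤ symMean K x k := by
  rw [symMean_eq_esymm_div]
  exact div_nonneg (esymm_nonneg (fun j _ => hx j) k) (Nat.cast_nonneg _)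

lemma symMean_one : symMean K x 1 = (∑ j, x j) / K := by
  rw [symMean_eq_esymm_div, esymm_one, Nat.choose_one_right]

lemma symMean_self : symMean K x K = ∏ j, x j := by
  have h := powersetCard_self (univ : Finset (Fin K))
  rw [card_univ, Fintype.card_fin] at h
  simp [symMean_eq_esymm_div, esymm, h]

lemma symMean_succ_le_symMean_one_mul (hx : ∀ j, 0 ≤ x j) {k : ℕ} (hk : 1 ≤ k) (hkK : k < K) :
    symMean K x (k + 1) ≤ symMean K x 1 * symMean K x k := by
  obtain ⟨m, rfl⟩ : ∃ m, k = m + 1 := ⟨k - 1, by omega⟩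
  rw [show m + 1 + 1 = m + 2 from rfl]
  have key := card_mul_esymm_le (s := univ) (fun j _ => hx j) m
  rw [card_univ, Fintype.card_fin, esymm_one] at key
  have hchoose : ((m : ℝ) + 2) * K.choose (m + 2) = (K - (m + 1)) * K.choose (m + 1) := by
    have h := Nat.choose_succ_right_eq K (m + 1)
    rw [← Nat.cast_inj (R := ℝ)] at h
    push_cast [Nat.cast_sub hkK.le] at h
    linarith
  have hC1 : (0 : ℝ) < K.choose (m + 1) := Nat.cast_pos.2 (Nat.choose_pos hkK.le)
  have hC2 : (0 : ℝ) < K.choose (m + 2) := Nat.cast_pos.2 (Nat.choose_pos hkK)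
  have hK : (0 : ℝ) < K := Nat.cast_pos.2 (by omega)
  rw [symMean_one, symMean_eq_esymm_div, symMean_eq_esymm_div, div_mul_div_comm,
    div_le_div_iff₀ hC2 (mul_pos hK hC1)]
  refine le_of_mul_le_mul_left ?_ (by positivity : (0 : ℝ) < m + 2)
  linear_combination (K.choose (m + 1) : ℝ) * key - (∑ j, x j) * univ.esymm x (m + 1) * hchoose

end SymMean

/-- For `x_1, ..., x_K ∈ [0,1]`,
`1 - (∑ x_j)/K ≤ (1 - ∏ x_j) / (1 + ∑_{k=1}^{K-1} S_k)`. -/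
theorem negFeedback_vs_rw_ineq (K : ℕ) (hK : 1 ≤ K) (x : Fin K → ℝ)
    (hx : ∀ j, x j ∈ Set.Icc (0 : ℝ) 1) :
    1 - (∑ j, x j) / K ≤
      (1 - ∏ j, x j) / (1 + ∑ k ∈ Finset.Icc 1 (K - 1), symMean K x k) := by
  have hx0 : ∀ j, 0 ≤ x j := fun j => (hx j).1
  have hS : 0 ≤ ∑ k ∈ Icc 1 (K - 1), symMean K x k :=
    sum_nonneg fun k _ => symMean_nonneg x hx0 k
  rw [← symMean_one, ← symMean_self, le_div_iff₀ (by linarith)]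
  have hstep : ∑ k ∈ Icc 1 (K - 1), symMean K x (k + 1)
      ≤ symMean K x 1 * ∑ k ∈ Icc 1 (K - 1), symMean K x k := by
    rw [mul_sum]
    exact sum_le_sum fun k hk =>
      symMean_succ_le_symMean_one_mul x hx0 (mem_Icc.1 hk).1 (by grind)
  have htelescope : ∑ k ∈ Icc 1 (K - 1), (symMean K x (k + 1) - symMean K x k)
      = symMean K x K - symMean K x 1 := by
    rw [← Ico_add_one_right_eq_Icc, Nat.sub_add_cancel hK]
    exact sum_Ico_sub (symMean K x) hK
  rw [sum_sub_distrib] at htelescope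
  linear_combination hstep - htelescope
end

section
/- Consider the negative feedback walk on a rooted tree of depth $H$ in which every non-leaf node has at most $b$ children, started at the root. Then before all nodes have been visited at least once, the root is visited at most $bH$ times. -/
open Finset
open scoped Classical

/-- `transCount w t i j`: the number of transitions from node `i` to node `j` made by
the trajectory `w` before time `t`. -/
noncomputable def transCount {V : Type*} (w : ℕ → V) (t : ℕ) (i j : V) : ℕ :=
  ((Finset.range t).filter (fun s => w s = i ∧ w (s + 1) = j)).card

/-- A trajectory `w` is admissible for the negative feedback ("favor least") walk on the
graph with adjacency relation `Adj`: each step goes to a neighbour of the current node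
whose prior transition count from the current node is minimal. -/
def IsNegFeedbackWalk {V : Type*} (Adj : V → V → Prop) (w : ℕ → V) : Prop :=
  ∀ t : ℕ, Adj (w t) (w (t + 1)) ∧
    ∀ j : V, Adj (w t) j → transCount w t (w t) (w (t + 1)) ≤ transCount w t (w t) j

/-- Adjacency relation of a rooted tree given by its parent map: two distinct nodes are
adjacent iff one is the parent of the other. -/
def treeAdj {V : Type*} (parent : V → V) (i j : V) : Prop :=
  i ≠ j ∧ (parent i = j ∨ parent j = i)

lemma transCount_succ {V : Type*} (w : ℕ → V) (t : ℕ) (i j : V) :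
    transCount w (t + 1) i j =
      transCount w t i j + (if w t = i ∧ w (t + 1) = j then 1 else 0) := by
  unfold transCount
  rw [Finset.range_add_one, Finset.filter_insert]
  split
  · rw [Finset.card_insert_of_notMem (by simp)]
  · simp

lemma transCount_mono {V : Type*} (w : ℕ → V) {t t' : ℕ} (h : t ≤ t') (i j : V) :
    transCount w t i j ≤ transCount w t' i j :=
  Finset.card_le_card (Finset.filter_subset_filter _ (Finset.range_subset_range.2 h))

lemma iter_root {V : Type*} {parent : V → V} {r : V} (hroot : parent r = r) :
    ∀ m, parent^[m] r = r := by
  intro m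
  induction m with
  | zero => rfl
  | succ m ih => rw [Function.iterate_succ_apply', ih, hroot]

lemma no_cycle {V : Type*} {parent : V → V} {r : V} {H : ℕ}
    (hroot : parent r = r) (hdepth : ∀ v : V, parent^[H] v = r)
    {a : V} (ha : a ≠ r) : ∀ m, parent^[m + 1] a ≠ a := by
  intro m hm
  have key : ∀ j, parent^[j * (m + 1)] a = a := by
    intro j
    induction j with
    | zero => simp
    | succ j ih =>
      rw [Nat.succ_mul, Function.iterate_add_apply, hm, ih]
  have h2 : parent^[H * (m + 1)] a = r := by
    have he : H * (m + 1) = m * H + H := by ring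
    rw [he, Function.iterate_add_apply, hdepth a, iter_root hroot]
  exact ha ((key H).symm.trans h2)

/-- Crossing lemma: entries into the subtree below `a` equal exits plus the
indicator of being currently in the subtree. -/
lemma crossing {V : Type*} {parent : V → V} {r : V} {H : ℕ}
    (hroot : parent r = r) (hdepth : ∀ v : V, parent^[H] v = r)
    {w : ℕ → V} (hw : IsNegFeedbackWalk (treeAdj parent) w) (h0 : w 0 = r)
    {a : V} (ha : a ≠ r) (t : ℕ) :
    transCount w t (parent a) a =
      transCount w t a (parent a) + (if ∃ m, parent^[m] (w t) = a then 1 else 0) := by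
  have hpa : parent a ≠ a := fun h => no_cycle hroot hdepth ha 0 h
  have hnpa : ¬ ∃ m, parent^[m] (parent a) = a := by
    rintro ⟨m, hm⟩
    exact no_cycle hroot hdepth ha m (by rw [Function.iterate_succ_apply, hm])
  induction t with
  | zero =>
    have hz : ¬ ∃ m, parent^[m] (w 0) = a := by
      rw [h0]
      rintro ⟨m, hm⟩
      exact ha ((iter_root hroot m ▸ hm).symm)
    simp [transCount, hz]
  | succ t ih =>
    obtain ⟨⟨hne, hadj⟩, -⟩ := hw t
    rw [transCount_succ, transCount_succ, ih]
    by_cases hen : w t = parent a ∧ w (t + 1) = a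
    · -- entering the subtree
      have hxa : w t ≠ a := by rw [hen.1]; exact hpa
      have hite : ¬ (w t = a ∧ w (t + 1) = parent a) := fun h => hxa h.1
      have hb1 : ¬ ∃ m, parent^[m] (w t) = a := by rw [hen.1]; exact hnpa
      have hb2 : ∃ m, parent^[m] (w (t + 1)) = a := ⟨0, hen.2⟩
      rw [if_pos hen, if_neg hite, if_neg hb1, if_pos hb2]
    · by_cases hex : w t = a ∧ w (t + 1) = parent a
      · -- exiting the subtree
        have hb1 : ∃ m, parent^[m] (w t) = a := ⟨0, hex.1⟩
        have hb2 : ¬ ∃ m, parent^[m] (w (t + 1)) = a := by rw [hex.2]; exact hnpa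
        rw [if_neg hen, if_pos hex, if_pos hb1, if_neg hb2]
      · -- no crossing: membership preserved
        have hmem : (∃ m, parent^[m] (w t) = a) ↔ (∃ m, parent^[m] (w (t + 1)) = a) := by
          rcases hadj with hp | hp
          · have hxa : w t ≠ a := fun h => hex ⟨h, by rw [← hp, h]⟩
            constructor
            · rintro ⟨m, hm⟩
              match m, hm with
              | 0, hm => exact absurd hm hxa
              | m + 1, hm =>
                rw [Function.iterate_succ_apply, hp] at hm
                exact ⟨m, hm⟩
            · rintro ⟨m, hm⟩
              exact ⟨m + 1, by rw [Function.iterate_succ_apply, hp, hm]⟩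
          · have hya : w (t + 1) ≠ a := fun h => hen ⟨by rw [← hp, h], h⟩
            constructor
            · rintro ⟨m, hm⟩
              exact ⟨m + 1, by rw [Function.iterate_succ_apply, hp, hm]⟩
            · rintro ⟨m, hm⟩
              match m, hm with
              | 0, hm => exact absurd hm hya
              | m + 1, hm =>
                rw [Function.iterate_succ_apply, hp] at hm
                exact ⟨m, hm⟩
        rw [if_neg hen, if_neg hex]
        by_cases hb : ∃ m, parent^[m] (w t) = a
        · rw [if_pos hb, if_pos (hmem.1 hb)]
        · rw [if_neg hb, if_neg (hmem.not.1 hb)]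

lemma transCount_eq_zero {V : Type*} {w : ℕ → V} {t : ℕ} {i : V}
    (h : ∀ s < t, w s ≠ i) (j : V) : transCount w t i j = 0 := by
  unfold transCount
  rw [Finset.card_eq_zero, Finset.eq_empty_iff_forall_notMem]
  intro s hs
  obtain ⟨hsr, hs1, -⟩ := Finset.mem_filter.1 hs
  exact h s (Finset.mem_range.1 hsr) hs1

/-- on a rooted tree of depth at most `H` in which every node has at most
`b` children, along any negative feedback walk started at the root, as long as some node
is still unvisited the root has been visited at most `bH` times. -/
theorem tree_negFeedback_root_visits {V : Type*} [Fintype V] [DecidableEq V]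
    (parent : V → V) (r : V) (H b : ℕ)
    (hroot : parent r = r)
    (hdepth : ∀ v : V, parent^[H] v = r)
    (hchild : ∀ v : V, (Finset.univ.filter (fun u => parent u = v ∧ u ≠ r)).card ≤ b)
    (w : ℕ → V) (hw : IsNegFeedbackWalk (treeAdj parent) w) (h0 : w 0 = r)
    (n : ℕ) (hn : ∃ v : V, ∀ t ≤ n, w t ≠ v) :
    ((Finset.range (n + 1)).filter (fun t => w t = r)).card ≤ b * H := by
  obtain ⟨v, hv⟩ := hn
  have hvr : v ≠ r := fun h => hv 0 (Nat.zero_le n) (h ▸ h0)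
  -- the depth of v
  have hex : ∃ h, parent^[h] v = r := ⟨H, hdepth v⟩
  set h := Nat.find hex with hh
  have hfh : parent^[h] v = r := Nat.find_spec hex
  have hmin : ∀ k, k < h → parent^[k] v ≠ r := fun k hk => Nat.find_min hex hk
  have hh1 : 1 ≤ h := by
    by_contra hcon
    have h0' : h = 0 := by omega
    rw [h0'] at hfh
    exact hvr hfh
  have hhH : h ≤ H := Nat.find_le (hdepth v)
  set p : ℕ → V := fun k => parent^[k] v with hp
  have hpsucc : ∀ k, parent (p k) = p (k + 1) := fun k =>
    (Function.iterate_succ_apply' parent k v).symm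
  have hph : p h = r := hfh
  have hp0 : p 0 = v := rfl
  -- Key lemma: up-moves along the path are bounded
  have upbound : ∀ k, k < h → ∀ t, t ≤ n + 1 → transCount w t (p k) (p (k + 1)) ≤ k := by
    intro k
    induction k with
    | zero =>
      intro _ t ht
      rw [Nat.le_zero]
      exact transCount_eq_zero (fun s hs his => hv s (by omega) (hp0 ▸ his)) _
    | succ k ih =>
      intro hk
      have hkh : k < h := by omega
      have hpkr : p k ≠ r := hmin k hkh
      have hnb : ¬ ∃ m, parent^[m] (p (k + 1)) = p k := by
        rintro ⟨m, hm⟩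
        rw [← hpsucc k] at hm
        exact no_cycle hroot hdepth hpkr m
          (by rw [Function.iterate_succ_apply, hm])
      have hadj : treeAdj parent (p (k + 1)) (p k) := by
        refine ⟨?_, Or.inr (hpsucc k)⟩
        intro he
        have hfix : parent (p k) = p k := by rw [hpsucc k, ← he]
        exact no_cycle hroot hdepth hpkr 0 (by simpa using hfix)
      intro t
      induction t with
      | zero =>
        intro _
        unfold transCount
        simp
      | succ t iht =>
        intro ht
        have ht' : t ≤ n + 1 := by omega
        rw [transCount_succ]
        by_cases hstep : w t = p (k + 1) ∧ w (t + 1) = p (k + 1 + 1)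
        · have hfb := (hw t).2 (p k) (hstep.1 ▸ hadj)
          rw [hstep.1, hstep.2] at hfb
          have hcr := crossing hroot hdepth hw h0 hpkr t
          rw [hpsucc k, hstep.1, if_neg hnb] at hcr
          have hub := ih hkh t ht'
          rw [if_pos hstep]
          omega
        · rw [if_neg hstep]
          have := iht ht'
          omega
  -- Bound on transitions from the root to any of its children
  have rootbound : ∀ j : V, parent j = r → j ≠ r → transCount w (n + 1) r j ≤ h := by
    intro j hj hjr
    have he1 : h - 1 + 1 = h := by omega
    have hcr' : parent (p (h - 1)) = r := by
      have h1 := hpsucc (h - 1)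
      rwa [he1, hph] at h1
    have hcne : p (h - 1) ≠ r := hmin (h - 1) (by omega)
    have hadjc : treeAdj parent r (p (h - 1)) := ⟨fun he => hcne he.symm, Or.inr hcr'⟩
    have key : ∀ t, t ≤ n + 1 → transCount w t r j ≤ h := by
      intro t
      induction t with
      | zero =>
        intro _
        unfold transCount
        simp
      | succ t iht =>
        intro ht
        have ht' : t ≤ n + 1 := by omega
        rw [transCount_succ]
        by_cases hstep : w t = r ∧ w (t + 1) = j
        · have hfb := (hw t).2 (p (h - 1)) (hstep.1 ▸ hadjc)
          rw [hstep.1, hstep.2] at hfb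
          have hcrr := crossing hroot hdepth hw h0 hcne t
          rw [hcr', hstep.1] at hcrr
          rw [if_neg (by
            rintro ⟨m, hm⟩
            exact hcne ((iter_root hroot m ▸ hm).symm))] at hcrr
          have hub : transCount w t (p (h - 1)) r ≤ h - 1 := by
            have h2 := upbound (h - 1) (by omega) t ht'
            rwa [he1, hph] at h2
          rw [if_pos hstep]
          omega
        · rw [if_neg hstep]
          have := iht ht'
          omega
    exact key (n + 1) le_rfl
  -- Sum over children
  have hfiber : ∀ t ∈ (Finset.range (n + 1)).filter (fun t => w t = r),
      w (t + 1) ∈ Finset.univ.filter (fun u => parent u = r ∧ u ≠ r) := by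
    intro t htm
    rw [Finset.mem_filter] at htm
    obtain ⟨⟨hne, hadj⟩, -⟩ := hw t
    rw [htm.2] at hne hadj
    rw [Finset.mem_filter]
    refine ⟨Finset.mem_univ _, ?_, fun he => hne he.symm⟩
    rcases hadj with hp' | hp'
    · exact absurd (hroot.symm.trans hp') hne
    · exact hp'
  rw [Finset.card_eq_sum_card_fiberwise hfiber]
  have hterm : ∀ j ∈ Finset.univ.filter (fun u => parent u = r ∧ u ≠ r),
      (((Finset.range (n + 1)).filter (fun t => w t = r)).filter
        (fun t => w (t + 1) = j)).card ≤ h := by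
    intro j hj
    rw [Finset.mem_filter] at hj
    rw [Finset.filter_filter]
    have hrb := rootbound j hj.2.1 hj.2.2
    unfold transCount at hrb
    convert hrb using 2
    congr!
  calc ∑ j ∈ Finset.univ.filter (fun u => parent u = r ∧ u ≠ r),
        (((Finset.range (n + 1)).filter (fun t => w t = r)).filter
          (fun t => w (t + 1) = j)).card
      ≤ ∑ _j ∈ Finset.univ.filter (fun u => parent u = r ∧ u ≠ r), h :=
        Finset.sum_le_sum hterm
    _ = (Finset.univ.filter (fun u => parent u = r ∧ u ≠ r)).card * h := by
        rw [Finset.sum_const, smul_eq_mul]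
    _ ≤ b * H := Nat.mul_le_mul (hchild r) hhH
end
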